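/- arXiv:quant-ph/9611015 — 5 statements merged into one kernel-verified Lean document; each statement's English description precedes it below -/
import Mathlib

section
/- Let 𝓗 be a complex Hilbert space, τ a normalized POV-measure on the Borel sets of ℝ with values in the bounded operators on 𝓗, and U : ℝ → B(𝓗) a one-parameter unitary group satisfying the positive-energy condition, such that (τ, U) is a covariance system: U(λ) τ(X) U(λ)* = τ(X + λ) for every Borel set X ⊆ ℝ and every λ ∈ ℝ. Then for every nonzero φ ∈ 𝓗 and every pair of reals a < b one has ⟨φ, τ((a, b]) φ⟩ > 0. -/
/-!
If `⟪φ, τ((a, b]) φ⟫ = 0`, covariance and positivity give `τ(I) U(t) φ = 0` for `t` in an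
interval, where `I = (a, a + ε]` with `ε = (b - a) / 2`. Each matrix element
`t ↦ ⟪χ, τ(I) U(t) φ⟫` is the boundary value of a bounded holomorphic function on the upper
half-plane vanishing on a boundary interval `(c, d)`, hence vanishes identically: the map
`ζ ↦ (d - c u) / (1 - u)`, `u = exp (i (θ + (π - θ) ζ))`, sends the strip `0 ≤ re ζ ≤ 1` into the
closed half-plane and its right edge into `(c, d)`, so the three-lines theorem kills the pulled-back
function, and as `θ` varies the images of the open strip cover the half-plane. Hence
`⟪φ, τ(I + s) φ⟫ = 0` for every `s`, and countably many translates of `I` cover `ℝ`, so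
`‖φ‖² = ⟪φ, τ(ℝ) φ⟫ = 0`.
-/

open MeasureTheory Complex Set
open scoped InnerProductSpace Real
open Complex.HadamardThreeLines (verticalStrip verticalClosedStrip)

noncomputable def intervalMobius (a b : ℝ) (w : ℂ) : ℂ := (b - a * w) / (1 - w)

noncomputable def stripExp (θ : ℝ) (ζ : ℂ) : ℂ := exp ((θ + (π - θ) * ζ) * I)

section StripToHalfPlane

variable {a b θ : ℝ} {ζ : ℂ}

lemma intervalMobius_im (a b : ℝ) (w : ℂ) :
    (intervalMobius a b w).im = (b - a) * w.im / normSq (1 - w) := by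
  simp only [intervalMobius, div_im, sub_im, ofReal_im, mul_im, ofReal_re, zero_mul, add_zero,
    zero_sub, sub_re, one_re, neg_mul, mul_re, sub_zero, one_im, mul_neg]
  ring

lemma intervalMobius_neg_ofReal (hab : a < b) {r : ℝ} (hr : 0 < r) :
    ∃ x ∈ Ioo a b, intervalMobius a b (-r) = x := by
  refine ⟨(b + a * r) / (1 + r), ⟨?_, ?_⟩, ?_⟩
  · rw [lt_div_iff₀ (by positivity)]; nlinarith
  · rw [div_lt_iff₀ (by positivity)]; nlinarith
  · have : (1 + r : ℂ) ≠ 0 := by exact_mod_cast (by positivity : (1 + r) ≠ 0)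
    simp only [intervalMobius]
    field_simp
    push_cast
    ring

lemma intervalMobius_sub_div_sub (hab : a ≠ b) {z : ℂ} (hz : z ≠ a) :
    intervalMobius a b ((z - b) / (z - a)) = z := by
  have hza : z - a ≠ 0 := sub_ne_zero.2 hz
  have hba : (b : ℂ) - a ≠ 0 := sub_ne_zero.2 (by exact_mod_cast hab.symm)
  have h1 : 1 - (z - b) / (z - a) = (b - a) / (z - a) := by field_simp; ring
  rw [intervalMobius, h1]
  field_simp
  ring

lemma im_sub_div_sub (a b : ℝ) (z : ℂ) :
    ((z - b) / (z - a)).im = (b - a) * z.im / normSq (z - a) := by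
  simp only [div_im, sub_im, ofReal_im, sub_zero, sub_re, ofReal_re]
  ring

lemma differentiable_stripExp (θ : ℝ) : Differentiable ℂ (stripExp θ) := by
  unfold stripExp
  fun_prop

lemma stripExp_im (θ : ℝ) (ζ : ℂ) :
    (stripExp θ ζ).im = Real.exp (-(π - θ) * ζ.im) * Real.sin (θ + (π - θ) * ζ.re) := by
  rw [stripExp, exp_im]
  congr 2
  · simp only [mul_re, add_re, ofReal_re, sub_re, sub_im, ofReal_im, sub_self, zero_mul, sub_zero,
      I_re, mul_zero, add_im, mul_im, add_zero, zero_add, I_im, mul_one, zero_sub, neg_sub]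
    ring
  · simp

lemma stripExp_im_pos (hθ : θ ∈ Ioo 0 π) (hζ : ζ.re ∈ Ico 0 1) : 0 < (stripExp θ ζ).im := by
  rw [stripExp_im]
  refine mul_pos (Real.exp_pos _) (Real.sin_pos_of_pos_of_lt_pi ?_ ?_) <;>
    nlinarith [hθ.1, hθ.2, hζ.1, hζ.2]

lemma stripExp_of_re_eq_one (θ : ℝ) (hζ : ζ.re = 1) :
    stripExp θ ζ = -(Real.exp (-(π - θ) * ζ.im) : ℂ) := by
  have : (θ + (π - θ) * ζ) * I = (-(π - θ) * ζ.im : ℝ) + π * I := by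
    apply Complex.ext
    · simp only [mul_re, add_re, ofReal_re, sub_re, hζ, mul_one, sub_im, ofReal_im, sub_self,
        zero_mul, sub_zero, add_sub_cancel, I_re, mul_zero, add_im, mul_im, add_zero, zero_add,
        I_im, zero_sub, neg_sub, ofReal_mul, ofReal_sub]
      ring
    · simp [hζ]
  rw [stripExp, this, Complex.exp_add, exp_pi_mul_I, ofReal_exp]
  ring

lemma stripExp_ne_one (hθ : θ ∈ Ioo 0 π) (hζ : ζ.re ∈ Icc 0 1) : stripExp θ ζ ≠ 1 := by
  rcases hζ.2.lt_or_eq with h | h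
  · exact fun h1 => (stripExp_im_pos hθ ⟨hζ.1, h⟩).ne' (by simp [h1])
  · rw [stripExp_of_re_eq_one θ h]
    intro h1
    have := congrArg re h1
    simp only [neg_re, ofReal_re, one_re] at this
    linarith [Real.exp_pos (-(π - θ) * ζ.im)]

lemma exists_stripExp_eq {w : ℂ} (hw : 0 < w.im) :
    ∃ θ ∈ Ioo 0 π, ∃ ζ : ℂ, ζ.re ∈ Ioo 0 1 ∧ stripExp θ ζ = w := by
  have harg_pos : 0 < w.arg :=
    (arg_nonneg_iff.2 hw.le).lt_of_ne' fun h => hw.ne' (arg_eq_zero_iff.1 h).2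
  have harg_lt : w.arg < π := arg_lt_pi_iff.2 (Or.inr hw.ne')
  set θ := w.arg / 2 with hθ
  have hπθ : 0 < π - θ := by linarith
  refine ⟨θ, ⟨by positivity, by linarith⟩, (log w / I - θ) / (π - θ : ℝ), ?_, ?_⟩
  · have : ((log w / I - θ) / (π - θ : ℝ)).re = θ / (π - θ) := by
      rw [div_ofReal_re, sub_re, div_I, neg_re, mul_re]
      simp only [I_re, mul_zero, log_im, I_im, mul_one, zero_sub, neg_neg, ofReal_re]
      ring
    rw [this, mem_Ioo, div_lt_one hπθ]
    exact ⟨by positivity, by linarith⟩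
  · rw [stripExp, ← ofReal_sub, mul_div_cancel₀ _ (ofReal_ne_zero.2 hπθ.ne'), add_sub_cancel,
      div_mul_cancel₀ _ I_ne_zero, Complex.exp_log]
    rintro rfl
    simp at hw

lemma intervalMobius_stripExp_im_pos (hab : a < b) (hθ : θ ∈ Ioo 0 π) (hζ : ζ.re ∈ Ico 0 1) :
    0 < (intervalMobius a b (stripExp θ ζ)).im := by
  rw [intervalMobius_im]
  exact div_pos (mul_pos (sub_pos.2 hab) (stripExp_im_pos hθ hζ))
    (normSq_pos.2 (sub_ne_zero.2 (stripExp_ne_one hθ (Ico_subset_Icc_self hζ)).symm))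

lemma intervalMobius_stripExp_of_re_eq_one (hab : a < b) (θ : ℝ) (hζ : ζ.re = 1) :
    ∃ x ∈ Ioo a b, intervalMobius a b (stripExp θ ζ) = x := by
  rw [stripExp_of_re_eq_one θ hζ]
  exact intervalMobius_neg_ofReal hab (Real.exp_pos _)

lemma intervalMobius_stripExp_im_nonneg (hab : a < b) (hθ : θ ∈ Ioo 0 π)
    (hζ : ζ.re ∈ Icc 0 1) : 0 ≤ (intervalMobius a b (stripExp θ ζ)).im := by
  rcases hζ.2.lt_or_eq with h | h
  · exact (intervalMobius_stripExp_im_pos hab hθ ⟨hζ.1, h⟩).le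
  · obtain ⟨x, -, hx⟩ := intervalMobius_stripExp_of_re_eq_one hab θ h
    simp [hx]

lemma differentiableAt_intervalMobius_stripExp (hθ : θ ∈ Ioo 0 π) (hζ : ζ.re ∈ Icc 0 1) :
    DifferentiableAt ℂ (intervalMobius a b ∘ stripExp θ) ζ := by
  have hd := differentiable_stripExp θ ζ
  exact ((differentiableAt_const _).sub ((differentiableAt_const _).mul hd)).div
    ((differentiableAt_const _).sub hd) (sub_ne_zero.2 (stripExp_ne_one hθ hζ).symm)

end StripToHalfPlane

lemma DiffContOnCl.eq_zero_of_eq_zero_on_re_eq_one {E : Type*} [NormedAddCommGroup E]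
    [NormedSpace ℂ E] {G : ℂ → E} (hd : DiffContOnCl ℂ G (verticalStrip 0 1))
    (hB : BddAbove ((norm ∘ G) '' verticalClosedStrip 0 1)) (h1 : ∀ z : ℂ, z.re = 1 → G z = 0)
    {ζ : ℂ} (hζ : ζ.re ∈ Ioc 0 1) : G ζ = 0 := by
  obtain ⟨C, hC⟩ := hB
  have h := Complex.HadamardThreeLines.norm_le_interp_of_mem_verticalClosedStrip₀₁' G
    (a := C) (b := 0) (Ioc_subset_Icc_self hζ) hd ⟨C, hC⟩
    (fun z hz => hC ⟨z, by simp_all [verticalClosedStrip], rfl⟩)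
    (fun z hz => by simp [h1 z hz])
  rwa [Real.zero_rpow hζ.1.ne', mul_zero, norm_le_zero_iff] at h

theorem eqOn_zero_of_eq_zero_on_Ioo {F : ℂ → ℂ} {C a b : ℝ} (hab : a < b)
    (hbd : ∀ z : ℂ, 0 ≤ z.im → ‖F z‖ ≤ C) (hcont : ContinuousOn F {z | 0 ≤ z.im})
    (hdiff : DifferentiableOn ℂ F {z | 0 < z.im}) (hvan : ∀ x ∈ Ioo a b, F x = 0) :
    EqOn F 0 {z | 0 ≤ z.im} := by
  have hopen : EqOn F 0 {z | 0 < z.im} := by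
    intro z hz
    have hza : z ≠ a := fun h => by simp [h] at hz
    have hw : 0 < ((z - b) / (z - a)).im := by
      rw [im_sub_div_sub]
      exact div_pos (mul_pos (sub_pos.2 hab) hz) (normSq_pos.2 (sub_ne_zero.2 hza))
    obtain ⟨θ, hθ, ζ, hζ, hζz⟩ := exists_stripExp_eq hw
    have hψ : (intervalMobius a b ∘ stripExp θ) ζ = z := by
      rw [Function.comp_apply, hζz, intervalMobius_sub_div_sub hab.ne hza]
    rw [Pi.zero_apply, ← hψ, ← Function.comp_apply (f := F)]
    have hcl : closure (verticalStrip 0 1) ⊆ verticalClosedStrip 0 1 :=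
      closure_minimal (preimage_mono Ioo_subset_Icc_self) (isClosed_Icc.preimage continuous_re)
    refine DiffContOnCl.eq_zero_of_eq_zero_on_re_eq_one ⟨fun ξ hξ => ?_, ?_⟩ ?_ (fun ξ hξ => ?_)
      ⟨hζ.1, hζ.2.le⟩
    · exact ((hdiff.differentiableAt ((isOpen_lt continuous_const continuous_im).mem_nhds
        (intervalMobius_stripExp_im_pos hab hθ ⟨hξ.1.le, hξ.2⟩))).comp ξ
        (differentiableAt_intervalMobius_stripExp hθ ⟨hξ.1.le, hξ.2.le⟩)).differentiableWithinAt
    · refine (hcont.comp (fun ξ hξ => ?_) fun ξ hξ => ?_).mono hcl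
      · exact (differentiableAt_intervalMobius_stripExp hθ hξ).continuousAt.continuousWithinAt
      · exact intervalMobius_stripExp_im_nonneg hab hθ hξ
    · exact ⟨C, by rintro _ ⟨ξ, hξ, rfl⟩; exact hbd _ (intervalMobius_stripExp_im_nonneg hab hθ hξ)⟩
    · obtain ⟨x, hx, hxξ⟩ := intervalMobius_stripExp_of_re_eq_one hab θ hξ
      simp [hxξ, hvan x hx]
  exact hopen.of_subset_closure hcont continuousOn_const (fun z (hz : 0 < z.im) => hz.le)
    (closure_setOfPred_lt_im 0).ge

section Operators

variable {H : Type*} [NormedAddCommGroup H] [InnerProductSpace ℂ H]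

lemma ContinuousLinearMap.IsPositive.apply_eq_zero_iff_re_inner_nonpos [CompleteSpace H]
    {T : H →L[ℂ] H} (hT : T.IsPositive) (x : H) : T x = 0 ↔ (⟪x, T x⟫_ℂ).re ≤ 0 := by
  obtain ⟨S, hS, rfl⟩ : ∃ S : H →L[ℂ] H, IsSelfAdjoint S ∧ S * S = T :=
    ⟨CFC.sqrt T, (CFC.sqrt_nonneg T).isSelfAdjoint,
      CFC.sqrt_mul_sqrt_self T ((nonneg_iff_isPositive T).2 hT)⟩
  have hinner : (⟪x, S (S x)⟫_ℂ).re = ‖S x‖ ^ 2 := by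
    rw [← ContinuousLinearMap.adjoint_inner_left, hS.adjoint_eq, ← inner_self_eq_norm_sq (𝕜 := ℂ)]
    rfl
  show S (S x) = 0 ↔ (⟪x, S (S x)⟫_ℂ).re ≤ 0
  refine ⟨fun h => by simp [h], fun h => ?_⟩
  rw [hinner, _root_.sq_nonpos_iff, norm_eq_zero] at h
  rw [h, map_zero]

lemma exists_measure_eq_re_inner {α : Type*} [MeasurableSpace α] {τ : Set α → H →L[ℂ] H}
    (hτ_pos : ∀ X : Set α, MeasurableSet X → (τ X).IsPositive) (hτ_empty : τ ∅ = 0)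
    (hτ_add : ∀ X : ℕ → Set α, (∀ i, MeasurableSet (X i)) →
      Pairwise (Function.onFun Disjoint X) → ∀ φ : H,
      HasSum (fun i => ⟪φ, τ (X i) φ⟫_ℂ) ⟪φ, τ (⋃ i, X i) φ⟫_ℂ) (φ : H) :
    ∃ μ : Measure α, ∀ X, MeasurableSet X → μ X = ENNReal.ofReal (⟪φ, τ X φ⟫_ℂ).re := by
  refine ⟨Measure.ofMeasurable (fun X _ => ENNReal.ofReal (⟪φ, τ X φ⟫_ℂ).re) (by simp [hτ_empty])
    fun X hX hd => ?_, fun X hX => Measure.ofMeasurable_apply X hX⟩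
  have hsum := hasSum_re (hτ_add X hX hd φ)
  exact hsum.tsum_eq ▸ ENNReal.ofReal_tsum_of_nonneg
    (fun i => (hτ_pos _ (hX i)).re_inner_nonneg_right φ) hsum.summable

lemma adjoint_eq_apply_neg {U : ℝ → H →L[ℂ] H} [CompleteSpace H]
    (hU_inv : ∀ l, ContinuousLinearMap.adjoint (U l) ∘L U l = 1) (hU_zero : U 0 = 1)
    (hU_add : ∀ l m, U (l + m) = U l ∘L U m) (l : ℝ) :
    ContinuousLinearMap.adjoint (U l) = U (-l) :=
  calc ContinuousLinearMap.adjoint (U l)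
      = ContinuousLinearMap.adjoint (U l) ∘L (U l ∘L U (-l)) := by
        rw [← hU_add, add_neg_cancel, hU_zero]; rfl
    _ = U (-l) := by rw [← ContinuousLinearMap.comp_assoc, hU_inv]; rfl

def PositiveEnergy (U : ℝ → H →L[ℂ] H) : Prop :=
  ∀ χ ψ : H, ∃ F : ℂ → ℂ,
    (∃ C : ℝ, ∀ z : ℂ, 0 ≤ z.im → ‖F z‖ ≤ C) ∧
    ContinuousOn F {z : ℂ | 0 ≤ z.im} ∧
    DifferentiableOn ℂ F {z : ℂ | 0 < z.im} ∧
    ∀ l : ℝ, F (l : ℂ) = ⟪χ, U l ψ⟫_ℂ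

lemma PositiveEnergy.apply_eq_zero_of_forall_mem_Ioo [CompleteSpace H] {U : ℝ → H →L[ℂ] H}
    (hU : PositiveEnergy U) (T : H →L[ℂ] H) (φ : H) {a b : ℝ} (hab : a < b)
    (h : ∀ t ∈ Ioo a b, T (U t φ) = 0) (t : ℝ) : T (U t φ) = 0 := by
  suffices ∀ χ : H, ⟪χ, T (U t φ)⟫_ℂ = 0 from inner_self_eq_zero.1 (this _)
  intro χ
  obtain ⟨F, ⟨C, hbd⟩, hcont, hdiff, hF⟩ := hU (ContinuousLinearMap.adjoint T χ) φ
  have hF0 := eqOn_zero_of_eq_zero_on_Ioo hab hbd hcont hdiff fun x hx => by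
    rw [hF, ContinuousLinearMap.adjoint_inner_left, h x hx, inner_zero_right]
  simpa [hF, ContinuousLinearMap.adjoint_inner_left] using hF0 (show 0 ≤ (t : ℂ).im by simp)

end Operators

/-- **Strict positivity of covariant time POV-measures.**
If `τ` is a normalized POV-measure on the Borel sets of `ℝ` with values in the bounded
operators of a complex Hilbert space `H`, and `U` is a one-parameter unitary group
satisfying the positive-energy condition, such that `(τ, U)` is a covariance system
(`U(λ) τ(X) U(λ)* = τ(X + λ)`), then `⟨φ, τ((a,b]) φ⟩ > 0` for every nonzero `φ` and
every interval `(a, b]` with `a < b`. -/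
theorem covariant_pov_strictly_positive
    {H : Type*} [NormedAddCommGroup H] [InnerProductSpace ℂ H] [CompleteSpace H]
    (τ : Set ℝ → (H →L[ℂ] H)) (U : ℝ → (H →L[ℂ] H))
    -- τ is a normalized POV-measure on the Borel sets of ℝ
    (hτ_pos : ∀ X : Set ℝ, MeasurableSet X → (τ X).IsPositive)
    (hτ_empty : τ ∅ = 0)
    (hτ_univ : τ Set.univ = 1)
    (hτ_add : ∀ X : ℕ → Set ℝ, (∀ i, MeasurableSet (X i)) →
      Pairwise (Function.onFun Disjoint X) → ∀ φ : H,
      HasSum (fun i => ⟪φ, τ (X i) φ⟫_ℂ) ⟪φ, τ (⋃ i, X i) φ⟫_ℂ)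
    -- U is a one-parameter unitary group
    (hU_unitary : ∀ l : ℝ,
      U l ∘L ContinuousLinearMap.adjoint (U l) = 1 ∧
      ContinuousLinearMap.adjoint (U l) ∘L U l = 1)
    (hU_zero : U 0 = 1)
    (hU_add : ∀ l m : ℝ, U (l + m) = U l ∘L U m)
    -- positive-energy condition: matrix elements of U extend to bounded continuous
    -- functions on the closed upper half-plane, holomorphic in the open half-plane
    (hU_posenergy : ∀ χ ψ : H, ∃ F : ℂ → ℂ,
      (∃ C : ℝ, ∀ z : ℂ, 0 ≤ z.im → ‖F z‖ ≤ C) ∧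
      ContinuousOn F {z : ℂ | 0 ≤ z.im} ∧
      DifferentiableOn ℂ F {z : ℂ | 0 < z.im} ∧
      ∀ l : ℝ, F (l : ℂ) = ⟪χ, U l ψ⟫_ℂ)
    -- covariance: U(λ) τ(X) U(λ)* = τ(X + λ)
    (hcov : ∀ X : Set ℝ, MeasurableSet X → ∀ l : ℝ,
      U l ∘L τ X ∘L ContinuousLinearMap.adjoint (U l) = τ ((· + l) '' X)) :
    ∀ φ : H, φ ≠ 0 → ∀ a b : ℝ, a < b → 0 < (⟪φ, τ (Set.Ioc a b) φ⟫_ℂ).re := by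
  intro φ hφ a b hab
  obtain ⟨μ, hμ⟩ := exists_measure_eq_re_inner hτ_pos hτ_empty hτ_add φ
  set ε := (b - a) / 2 with hε
  have hε_pos : 0 < ε := by linarith
  have hX : MeasurableSet (Ioc a (a + ε)) := measurableSet_Ioc
  have hnull_iff : ∀ l : ℝ,
      μ (Ioc (a + l) (a + ε + l)) = 0 ↔ τ (Ioc a (a + ε)) (U (-l) φ) = 0 := by
    intro l
    rw [hμ _ measurableSet_Ioc, ← image_add_const_Ioc, ← hcov _ hX, ENNReal.ofReal_eq_zero,
      (hτ_pos _ hX).apply_eq_zero_iff_re_inner_nonpos, ContinuousLinearMap.comp_apply,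
      ContinuousLinearMap.comp_apply, ← ContinuousLinearMap.adjoint_inner_left,
      adjoint_eq_apply_neg (fun l => (hU_unitary l).2) hU_zero hU_add]
  by_contra hle
  have hIoc : μ (Ioc a b) = 0 := by
    rw [hμ _ measurableSet_Ioc, ENNReal.ofReal_eq_zero]
    exact not_lt.1 hle
  have hnear : ∀ t ∈ Ioo (-ε) 0, τ (Ioc a (a + ε)) (U t φ) = 0 := fun t ht => by
    rw [← neg_neg t, ← hnull_iff]
    exact measure_mono_null (Ioc_subset_Ioc (by linarith [ht.2]) (by linarith [ht.1])) hIoc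
  have htranslate : ∀ l : ℝ, μ (Ioc (a + l) (a + ε + l)) = 0 := fun l =>
    (hnull_iff l).2 (PositiveEnergy.apply_eq_zero_of_forall_mem_Ioo hU_posenergy _ φ (by linarith)
      hnear _)
  have huniv : μ univ = 0 := by
    rw [← iUnion_Ioc_add_zsmul hε_pos a]
    refine measure_iUnion_null fun n => ?_
    convert htranslate (n • ε) using 2
    rw [add_smul, one_smul, add_comm _ ε, add_assoc]
  rw [hμ _ MeasurableSet.univ, hτ_univ, one_apply_eq_self, ENNReal.ofReal_eq_zero] at huniv
  exact hφ ((re_inner_self_nonpos (𝕜 := ℂ)).1 huniv)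
end

section
/- Let 𝓗 be a nontrivial complex Hilbert space (containing some nonzero vector), τ a normalized POV-measure on the Borel sets of ℝ with values in the bounded operators on 𝓗, and U : ℝ → B(𝓗) a one-parameter unitary group satisfying the positive-energy condition, such that U(λ) τ(X) U(λ)* = τ(X + λ) for every Borel set X and every λ ∈ ℝ. Then τ is not projection-valued: there exists a Borel set X with τ(X) ∘ τ(X) ≠ τ(X). -/
open MeasureTheory Complex Filter
open scoped InnerProductSpace ComplexConjugate

open Set Asymptotics

/-!
If every `τ X` were a projection, finite additivity would make the projections of disjoint sets
orthogonal. Pick an interval `X` of length one with `τ X ≠ 0` and `ψ ≠ 0` in its range.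
Covariance moves `U λ ψ` into the range of `τ (X + λ)`, orthogonal to that of `τ X` once
`|λ| ≥ 1`, so the boundary values `F λ = ⟪ψ, U λ ψ⟫` of the positive-energy extension vanish
outside `(-1, 1)`. Then `F z * F (z + 2)` is bounded and holomorphic on the upper half-plane and
vanishes on the whole real axis, hence everywhere by Phragmén–Lindelöf; as the holomorphic
functions on the half-plane form an integral domain, `F = 0`, contradicting `F 0 = ‖ψ‖²`.
-/

theorem DifferentiableOn.conj_conj {f : ℂ → ℂ} {s : Set ℂ} (hf : DifferentiableOn ℂ f s)
    (hs : IsOpen s) : DifferentiableOn ℂ (conj ∘ f ∘ conj) (conj ⁻¹' s) :=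
  fun w hw => by
    simpa using (((hf _ hw).differentiableAt (hs.mem_nhds hw)).conj_conj).differentiableWithinAt

theorem eq_zero_of_eq_zero_on_real {g : ℂ → ℂ} {C : ℝ}
    (hbd : ∀ z : ℂ, 0 ≤ z.im → ‖g z‖ ≤ C) (hcont : ContinuousOn g {z : ℂ | 0 ≤ z.im})
    (hdiff : DifferentiableOn ℂ g {z : ℂ | 0 < z.im}) (hreal : ∀ x : ℝ, g x = 0)
    {z : ℂ} (hz : 0 < z.im) : g z = 0 := by
  set t := 2 * z.im
  have him : ∀ w : ℂ, (conj w + t * I).im = t - w.im := fun w => by simp; ring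
  -- `w ↦ conj w + t * I` is the reflection in the line `im = t / 2`, on which `z` lies, so the
  -- product below is `‖g z‖ ^ 2` at `z` and vanishes on both edges of the strip `0 ≤ im ≤ t`.
  set r : ℂ → ℂ := fun w => conj (g (conj w + t * I))
  have hr : r = (conj ∘ g ∘ conj) ∘ (· - t * I) := by
    ext w; simp [r, sub_eq_add_neg]
  have hd : DiffContOnCl ℂ (fun w => g w * r w) (im ⁻¹' Ioo 0 t) := by
    refine ⟨hdiff.mono (fun w hw => hw.1) |>.mul ?_, ?_⟩
    · rw [hr]
      refine (hdiff.conj_conj (isOpen_lt continuous_const continuous_im)).comp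
        (differentiableOn_id.sub_const _) fun w hw => ?_
      change 0 < (conj (w - t * I)).im
      simpa using hw.2
    · rw [closure_preimage_im, closure_Ioo (by simp [t, hz.ne'])]
      refine (hcont.mono fun w hw => hw.1).mul (continuous_conj.comp_continuousOn
        (hcont.comp (by fun_prop) fun w hw => ?_))
      change 0 ≤ (conj w + t * I).im
      rw [him]
      exact sub_nonneg.2 hw.2
  have hB : ∃ c < Real.pi / (t - 0), ∃ B, (fun w => g w * r w)
      =O[comap (_root_.abs ∘ re) atTop ⊓ 𝓟 (im ⁻¹' Ioo 0 t)]
        fun w => Real.exp (B * Real.exp (c * |w.re|)) := by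
    refine ⟨0, div_pos Real.pi_pos (by simp [t, hz]), 0, IsBigO.of_bound (C * C) ?_⟩
    refine eventually_inf_principal.2 (Eventually.of_forall fun w hw => ?_)
    have hrw : ‖r w‖ ≤ C := by
      simpa [r] using hbd (conj w + t * I) (by rw [him]; linarith [hw.2])
    simpa using mul_le_mul (hbd w hw.1.le) hrw (norm_nonneg _) ((norm_nonneg _).trans hrw)
  have h0 : ∀ w : ℂ, w.im = 0 → g w * r w = 0 := fun w hw => by
    rw [← re_add_im w, hw]; simp [hreal]
  have ht : ∀ w : ℂ, w.im = t → g w * r w = 0 := fun w hw => by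
    have : conj w + t * I = ((conj w + t * I).re : ℂ) := by
      apply Complex.ext <;> simp [him, hw]
    simp only [r]; rw [this, hreal, map_zero, mul_zero]
  have hfix : conj z + t * I = z := by apply Complex.ext <;> simp [t]; ring
  have := PhragmenLindelof.eq_zero_on_horizontal_strip hd hB h0 ht ⟨hz.le, by linarith⟩
  simpa [r, hfix] using this

theorem eqOn_zero_of_eq_zero_of_le_abs {F : ℂ → ℂ} {C r : ℝ}
    (hbd : ∀ z : ℂ, 0 ≤ z.im → ‖F z‖ ≤ C) (hcont : ContinuousOn F {z : ℂ | 0 ≤ z.im})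
    (hdiff : DifferentiableOn ℂ F {z : ℂ | 0 < z.im}) (hzero : ∀ x : ℝ, r ≤ |x| → F x = 0) :
    EqOn F 0 {z : ℂ | 0 ≤ z.im} := by
  have hopen : IsOpen {z : ℂ | 0 < z.im} := isOpen_lt continuous_const continuous_im
  have hshift : MapsTo (· + (2 * r : ℂ)) {z : ℂ | 0 ≤ z.im} {z : ℂ | 0 ≤ z.im} :=
    fun z hz => by simpa using hz
  have hshift' : MapsTo (· + (2 * r : ℂ)) {z : ℂ | 0 < z.im} {z : ℂ | 0 < z.im} :=
    fun z hz => by simpa using hz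
  have hprod : ∀ z : ℂ, 0 < z.im → F z * F (z + 2 * r) = 0 := by
    refine fun z => eq_zero_of_eq_zero_on_real (g := fun z => F z * F (z + 2 * r)) (C := C * C)
      (fun w hw => ?_) (hcont.mul (hcont.comp (by fun_prop) hshift))
      (hdiff.mul (hdiff.comp (by fun_prop) hshift')) fun x => ?_
    · rw [norm_mul]
      exact mul_le_mul (hbd w hw) (hbd _ (hshift hw)) (norm_nonneg _)
        ((norm_nonneg _).trans (hbd w hw))
    · rcases le_or_gt r |x| with hx | hx
      · rw [hzero x hx, zero_mul]
      · have : (x : ℂ) + 2 * r = ((x + 2 * r : ℝ) : ℂ) := by push_cast; ring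
        rw [this, hzero (x + 2 * r) (by rw [le_abs]; left; linarith [neg_abs_le x]), mul_zero]
  have hanalytic := hdiff.analyticOnNhd hopen
  have hopen_zero : EqOn F 0 {z : ℂ | 0 < z.im} := by
    rcases hanalytic.eq_zero_or_eq_zero_of_mul_eq_zero
      (hanalytic.comp (analyticOnNhd_id.add analyticOnNhd_const) hshift') hprod
      (convex_halfSpace_im_gt 0).isPreconnected with h | h
    · exact h
    · intro z hz
      simpa using h (z - 2 * r) (by simpa using hz)
  refine hopen_zero.of_subset_closure hcont continuousOn_const (fun z (hz : 0 < z.im) => hz.le) ?_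
  rw [show {z : ℂ | 0 < z.im} = im ⁻¹' Ioi 0 from rfl, closure_preimage_im, closure_Ioi]
  exact subset_rfl

theorem ContinuousLinearMap.exists_ne_zero_apply_eq_self {R M : Type*} [Semiring R]
    [TopologicalSpace M] [AddCommMonoid M] [Module R M] {P : M →L[R] M}
    (hP : IsIdempotentElem P) (h : P ≠ 0) : ∃ ψ, ψ ≠ 0 ∧ P ψ = ψ := by
  obtain ⟨φ, hφ⟩ : ∃ φ, P φ ≠ 0 := by
    by_contra! h'
    exact h (ContinuousLinearMap.ext h')
  exact ⟨P φ, hφ, congr($hP φ)⟩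

theorem ContinuousLinearMap.inner_apply_eq_zero_of_intertwining {𝕜 E : Type*} [RCLike 𝕜]
    [NormedAddCommGroup E] [InnerProductSpace 𝕜 E] {P Q U : E →L[𝕜] E}
    (hP : (P : E →ₗ[𝕜] E).IsSymmetric) (hPQ : P * Q = 0) (hUP : U * P = Q * U) {ψ : E}
    (hψ : P ψ = ψ) : ⟪ψ, U ψ⟫_𝕜 = 0 :=
  calc ⟪ψ, U ψ⟫_𝕜 = ⟪P ψ, U (P ψ)⟫_𝕜 := by rw [hψ]
    _ = ⟪ψ, (P * (U * P)) ψ⟫_𝕜 := hP _ _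
    _ = 0 := by rw [hUP, ← mul_assoc, hPQ]; simp

theorem mul_eq_mul_of_mul_mul_eq {M : Type*} [Monoid M] {U V A B : M} (hVU : V * U = 1)
    (h : U * (A * V) = B) : U * A = B * U := by
  rw [← h, ← mul_assoc, mul_assoc _ V, hVU, mul_one]

theorem Set.disjoint_Ioc_image_add_const {a d l : ℝ} (hl : d ≤ |l|) :
    Disjoint (Ioc a (a + d)) ((· + l) '' Ioc a (a + d)) := by
  rw [image_add_const_Ioc, Ioc_disjoint_Ioc]
  rcases le_abs.1 hl with h | h
  · exact (min_le_left _ _).trans ((by linarith : a + d ≤ a + l).trans (le_max_right _ _))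
  · exact (min_le_right _ _).trans ((by linarith : a + d + l ≤ a).trans (le_max_left _ _))

section WeaklyCountablyAdditive

variable {α 𝕜 H : Type*} [MeasurableSpace α] [RCLike 𝕜] [NormedAddCommGroup H]
  [InnerProductSpace 𝕜 H]

def IsWeaklyCountablyAdditive (τ : Set α → H →L[𝕜] H) : Prop :=
  ∀ X : ℕ → Set α, (∀ i, MeasurableSet (X i)) → Pairwise (Function.onFun Disjoint X) →
    ∀ φ : H, HasSum (fun i => ⟪φ, τ (X i) φ⟫_𝕜) ⟪φ, τ (⋃ i, X i) φ⟫_𝕜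

namespace IsWeaklyCountablyAdditive

variable {τ : Set α → H →L[𝕜] H}

open Classical in
noncomputable def diagonalMeasure (hτ : IsWeaklyCountablyAdditive τ) (hτ_empty : τ ∅ = 0) (φ : H) :
    VectorMeasure α 𝕜 where
  measureOf' X := if MeasurableSet X then ⟪φ, τ X φ⟫_𝕜 else 0
  empty' := by simp [hτ_empty]
  not_measurable' _ hX := if_neg hX
  m_iUnion' X hX hd := by simpa [hX, MeasurableSet.iUnion hX] using hτ X hX hd φ

theorem diagonalMeasure_apply (hτ : IsWeaklyCountablyAdditive τ) (hτ_empty : τ ∅ = 0) (φ : H)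
    {X : Set α} (hX : MeasurableSet X) : hτ.diagonalMeasure hτ_empty φ X = ⟪φ, τ X φ⟫_𝕜 :=
  if_pos hX

theorem exists_Ioc_ne_zero {τ : Set ℝ → H →L[𝕜] H} (hτ : IsWeaklyCountablyAdditive τ)
    (hτ_empty : τ ∅ = 0) (hτ_univ : τ univ = 1) (hH : ∃ φ : H, φ ≠ 0) :
    ∃ c : ℝ, τ (Ioc c (c + 1)) ≠ 0 := by
  by_contra! h
  obtain ⟨φ, hφ⟩ := hH
  have hsum := (hτ.diagonalMeasure hτ_empty φ).of_disjoint_iUnion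
    (fun _ => measurableSet_Ioc) (pairwise_disjoint_Ioc_intCast ℝ)
  simp only [iUnion_Ioc_intCast, hτ.diagonalMeasure_apply hτ_empty φ MeasurableSet.univ,
    hτ.diagonalMeasure_apply hτ_empty φ measurableSet_Ioc, h, hτ_univ] at hsum
  simp_all

variable [InnerProductSpace ℂ H] {τ : Set α → H →L[ℂ] H}

theorem map_union (hτ : IsWeaklyCountablyAdditive τ) (hτ_empty : τ ∅ = 0) {A B : Set α}
    (hA : MeasurableSet A) (hB : MeasurableSet B) (hAB : Disjoint A B) :
    τ (A ∪ B) = τ A + τ B := by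
  refine ContinuousLinearMap.coe_inj.1 ((ext_inner_map _ _).1 fun φ => ?_)
  have h := (hτ.diagonalMeasure hτ_empty φ).of_union hAB hA hB
  simp only [hτ.diagonalMeasure_apply hτ_empty φ, hA, hB, hA.union hB] at h
  change ⟪τ (A ∪ B) φ, φ⟫_ℂ = ⟪(τ A + τ B) φ, φ⟫_ℂ
  rw [← inner_conj_symm, h, add_apply, inner_add_left, map_add,
    inner_conj_symm, inner_conj_symm]

theorem mul_eq_zero_of_disjoint (hτ : IsWeaklyCountablyAdditive τ) (hτ_empty : τ ∅ = 0)
    (hproj : ∀ X, MeasurableSet X → IsIdempotentElem (τ X)) {A B : Set α}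
    (hA : MeasurableSet A) (hB : MeasurableSet B) (hAB : Disjoint A B) : τ A * τ B = 0 := by
  have hsum := hproj _ (hA.union hB)
  rw [hτ.map_union hτ_empty hA hB hAB, (hproj A hA).add_iff (hproj B hB)] at hsum
  have : IsAddTorsionFree (H →L[ℂ] H) := .of_isTorsionFree ℂ _
  exact (hproj A hA).mul_eq_zero_of_anticommute hsum

end IsWeaklyCountablyAdditive

end WeaklyCountablyAdditive

theorem covariant_pov_not_projection_valued_general
    {H : Type*} [NormedAddCommGroup H] [InnerProductSpace ℂ H] [CompleteSpace H]
    (hnontriv : ∃ φ : H, φ ≠ 0)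
    (τ : Set ℝ → (H →L[ℂ] H)) (U : ℝ → (H →L[ℂ] H))
    -- τ is a normalized POV-measure on the Borel sets of ℝ
    (hτ_pos : ∀ X : Set ℝ, MeasurableSet X → (τ X).IsPositive)
    (hτ_empty : τ ∅ = 0)
    (hτ_univ : τ Set.univ = 1)
    (hτ_add : ∀ X : ℕ → Set ℝ, (∀ i, MeasurableSet (X i)) →
      Pairwise (Function.onFun Disjoint X) → ∀ φ : H,
      HasSum (fun i => ⟪φ, τ (X i) φ⟫_ℂ) ⟪φ, τ (⋃ i, X i) φ⟫_ℂ)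
    -- U is a one-parameter unitary group
    (hU_unitary : ∀ l : ℝ,
      U l ∘L ContinuousLinearMap.adjoint (U l) = 1 ∧
      ContinuousLinearMap.adjoint (U l) ∘L U l = 1)
    (hU_zero : U 0 = 1)
    -- positive-energy condition: matrix elements of U extend to bounded continuous
    -- functions on the closed upper half-plane, holomorphic in the open half-plane
    (hU_posenergy : ∀ χ ψ : H, ∃ F : ℂ → ℂ,
      (∃ C : ℝ, ∀ z : ℂ, 0 ≤ z.im → ‖F z‖ ≤ C) ∧
      ContinuousOn F {z : ℂ | 0 ≤ z.im} ∧
      DifferentiableOn ℂ F {z : ℂ | 0 < z.im} ∧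
      ∀ l : ℝ, F (l : ℂ) = ⟪χ, U l ψ⟫_ℂ)
    -- covariance: U(λ) τ(X) U(λ)* = τ(X + λ)
    (hcov : ∀ X : Set ℝ, MeasurableSet X → ∀ l : ℝ,
      U l ∘L τ X ∘L ContinuousLinearMap.adjoint (U l) = τ ((· + l) '' X)) :
    ∃ X : Set ℝ, MeasurableSet X ∧ τ X ∘L τ X ≠ τ X := by
  by_contra! hproj
  replace hproj : ∀ X, MeasurableSet X → IsIdempotentElem (τ X) := hproj
  have hτ : IsWeaklyCountablyAdditive τ := hτ_add
  obtain ⟨c, hc⟩ := hτ.exists_Ioc_ne_zero hτ_empty hτ_univ hnontriv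
  set X := Ioc c (c + 1)
  obtain ⟨ψ, hψ0, hψ⟩ :=
    ContinuousLinearMap.exists_ne_zero_apply_eq_self (hproj X measurableSet_Ioc) hc
  have hvanish : ∀ l : ℝ, 1 ≤ |l| → ⟪ψ, U l ψ⟫_ℂ = 0 := fun l hl =>
    ContinuousLinearMap.inner_apply_eq_zero_of_intertwining
      (hτ_pos X measurableSet_Ioc).isSymmetric
      (hτ.mul_eq_zero_of_disjoint hτ_empty hproj measurableSet_Ioc
        (by rw [image_add_const_Ioc]; exact measurableSet_Ioc) (disjoint_Ioc_image_add_const hl))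
      (mul_eq_mul_of_mul_mul_eq (hU_unitary l).2 (hcov X measurableSet_Ioc l)) hψ
  obtain ⟨F, ⟨C, hbd⟩, hcont, hdiff, hF⟩ := hU_posenergy ψ ψ
  have hF0 := eqOn_zero_of_eq_zero_of_le_abs hbd hcont hdiff
    (fun x hx => (hF x).trans (hvanish x hx)) (show (0 : ℂ) ∈ {z : ℂ | 0 ≤ z.im} by simp)
  rw [← ofReal_zero, hF, hU_zero] at hF0
  exact hψ0 (inner_self_eq_zero.1 hF0)

/-- **Pauli's theorem, POV-measure form.**
On a nontrivial complex Hilbert space, a normalized POV-measure on the Borel sets of `ℝ`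
that is covariant with respect to a positive-energy one-parameter unitary group of time
translations cannot be projection-valued: some `τ(X)` fails to be idempotent. -/
theorem covariant_pov_not_projection_valued
    {H : Type*} [NormedAddCommGroup H] [InnerProductSpace ℂ H] [CompleteSpace H]
    (hnontriv : ∃ φ : H, φ ≠ 0)
    (τ : Set ℝ → (H →L[ℂ] H)) (U : ℝ → (H →L[ℂ] H))
    -- τ is a normalized POV-measure on the Borel sets of ℝ
    (hτ_pos : ∀ X : Set ℝ, MeasurableSet X → (τ X).IsPositive)
    (hτ_empty : τ ∅ = 0)
    (hτ_univ : τ Set.univ = 1)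
    (hτ_add : ∀ X : ℕ → Set ℝ, (∀ i, MeasurableSet (X i)) →
      Pairwise (Function.onFun Disjoint X) → ∀ φ : H,
      HasSum (fun i => ⟪φ, τ (X i) φ⟫_ℂ) ⟪φ, τ (⋃ i, X i) φ⟫_ℂ)
    -- U is a one-parameter unitary group
    (hU_unitary : ∀ l : ℝ,
      U l ∘L ContinuousLinearMap.adjoint (U l) = 1 ∧
      ContinuousLinearMap.adjoint (U l) ∘L U l = 1)
    (hU_zero : U 0 = 1)
    (hU_add : ∀ l m : ℝ, U (l + m) = U l ∘L U m)
    -- positive-energy condition: matrix elements of U extend to bounded continuous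
    -- functions on the closed upper half-plane, holomorphic in the open half-plane
    (hU_posenergy : ∀ χ ψ : H, ∃ F : ℂ → ℂ,
      (∃ C : ℝ, ∀ z : ℂ, 0 ≤ z.im → ‖F z‖ ≤ C) ∧
      ContinuousOn F {z : ℂ | 0 ≤ z.im} ∧
      DifferentiableOn ℂ F {z : ℂ | 0 < z.im} ∧
      ∀ l : ℝ, F (l : ℂ) = ⟪χ, U l ψ⟫_ℂ)
    -- covariance: U(λ) τ(X) U(λ)* = τ(X + λ)
    (hcov : ∀ X : Set ℝ, MeasurableSet X → ∀ l : ℝ,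
      U l ∘L τ X ∘L ContinuousLinearMap.adjoint (U l) = τ ((· + l) '' X)) :
    ∃ X : Set ℝ, MeasurableSet X ∧ τ X ∘L τ X ≠ τ X :=
  covariant_pov_not_projection_valued_general hnontriv τ U hτ_pos hτ_empty hτ_univ hτ_add hU_unitary
    hU_zero hU_posenergy hcov
end

section
/- Let F : ℂ → ℂ be bounded and continuous on the closed upper half-plane {z : Im z ≥ 0}, holomorphic on the open upper half-plane {z : Im z > 0}, and suppose there exists c > 0 such that F(x) = 0 for every real x with 0 ≤ x ≤ c. Then F(z) = 0 for every z with Im z ≥ 0. -/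
/-!
Compose `F` with the two self-maps `z ↦ c/2 - 1/z` and `z ↦ c/2 + c²z/4` of the upper half-plane:
on the real line the first sends `|x| ≥ 2/c`, the second `|x| ≤ 2/c`, into `[0, c]`. So the
product `G` of the two compositions is bounded and holomorphic on the upper half-plane and vanishes
on the whole real axis. After damping the discontinuity of `G` at `0` by the factor `z / (z + I)`,
the Phragmén–Lindelöf principle gives `G = 0`. Since holomorphic functions on a connected open set
form an integral domain, one of the two compositions vanishes identically, hence so does `F`, and
continuity carries this to the real axis.
-/

open Complex Set Filter Topology

lemma mapsTo_sub_inv (a : ℝ) :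
    MapsTo (fun z : ℂ => (a : ℂ) - z⁻¹) {z | 0 ≤ z.im} {z | 0 ≤ z.im} := fun z hz => by
  simpa [neg_div] using div_nonneg hz (normSq_nonneg z)

lemma mapsTo_sub_inv_of_pos (a : ℝ) :
    MapsTo (fun z : ℂ => (a : ℂ) - z⁻¹) {z | 0 < z.im} {z | 0 < z.im} := fun z hz => by
  have hz0 : z ≠ 0 := by rintro rfl; simp at hz
  simpa [neg_div] using div_pos hz (normSq_pos.2 hz0)

lemma surjOn_sub_inv (a : ℝ) :
    SurjOn (fun z : ℂ => (a : ℂ) - z⁻¹) {z | 0 < z.im} {z | 0 < z.im} := fun w hw => by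
  have hw0 : (a : ℂ) - w ≠ 0 := by
    intro h; rw [← sub_eq_zero.1 h] at hw; simp at hw
  refine ⟨((a : ℂ) - w)⁻¹, ?_, by simp⟩
  simpa [inv_im, neg_div] using div_pos hw (normSq_pos.2 hw0)

lemma mapsTo_add_mul {a : ℝ} (ha : 0 ≤ a) (b : ℝ) :
    MapsTo (fun z : ℂ => (b : ℂ) + a * z) {z | 0 ≤ z.im} {z | 0 ≤ z.im} := fun z hz => by
  simpa using mul_nonneg ha hz

lemma mapsTo_add_mul_of_pos {a : ℝ} (ha : 0 < a) (b : ℝ) :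
    MapsTo (fun z : ℂ => (b : ℂ) + a * z) {z | 0 < z.im} {z | 0 < z.im} := fun z hz => by
  simpa using mul_pos ha hz

lemma surjOn_add_mul {a : ℝ} (ha : 0 < a) (b : ℝ) :
    SurjOn (fun z : ℂ => (b : ℂ) + a * z) {z | 0 < z.im} {z | 0 < z.im} := fun w hw => by
  have ha' : (a : ℂ) ≠ 0 := ofReal_ne_zero.2 ha.ne'
  refine ⟨(w - b) / a, ?_, by simp only; field_simp; ring⟩
  simpa [div_ofReal_im] using div_pos hw ha

lemma add_I_ne_zero {z : ℂ} (hz : 0 ≤ z.im) : z + I ≠ 0 := by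
  intro h
  have := congrArg im h
  simp only [add_im, I_im, zero_im] at this
  linarith

lemma norm_le_norm_add_I {z : ℂ} (hz : 0 ≤ z.im) : ‖z‖ ≤ ‖z + I‖ := by
  rw [← sq_le_sq₀ (norm_nonneg _) (norm_nonneg _), ← normSq_eq_norm_sq, ← normSq_eq_norm_sq]
  simp only [normSq_apply, add_re, add_im, I_re, I_im]
  nlinarith

lemma norm_div_add_I_le_one {z : ℂ} (hz : 0 ≤ z.im) : ‖z / (z + I)‖ ≤ 1 := by
  rw [norm_div]
  exact div_le_one_of_le₀ (norm_le_norm_add_I hz) (norm_nonneg _)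

theorem eq_zero_of_diffContOnCl_upperHalfPlane {E : Type*} [NormedAddCommGroup E]
    [NormedSpace ℂ E] {f : ℂ → E} (hd : DiffContOnCl ℂ f {z | 0 < z.im})
    (hbdd : ∃ C, ∀ z : ℂ, 0 ≤ z.im → ‖f z‖ ≤ C) (hre : ∀ x : ℝ, f x = 0) {z : ℂ}
    (hz : 0 ≤ z.im) : f z = 0 := by
  obtain ⟨C, hC⟩ := hbdd
  have hrot : DiffContOnCl ℂ (fun w => f (I * w)) {w | 0 < w.re} :=
    hd.comp (differentiable_id.const_mul I).diffContOnCl fun w hw => by simpa using hw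
  have hO : (fun w => f (I * w)) =O[Bornology.cobounded ℂ ⊓ 𝓟 {w | 0 < w.re}]
      fun w => Real.exp (0 * ‖w‖ ^ (1 : ℝ)) := by
    refine Asymptotics.IsBigO.of_bound C (eventually_inf_principal.2 ?_)
    exact Eventually.of_forall fun w hw => by simpa using hC _ (by simpa using le_of_lt hw)
  have hreal : IsBoundedUnder (· ≤ ·) atTop fun x : ℝ => ‖f (I * x)‖ :=
    isBoundedUnder_of_eventually_le <| (eventually_ge_atTop 0).mono fun x hx => hC _ (by simpa)
  have him : ∀ x : ℝ, ‖f (I * (x * I))‖ ≤ 0 := fun x => by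
    simpa [mul_left_comm I, ← ofReal_neg] using hre (-x)
  simpa [← mul_assoc] using PhragmenLindelof.right_half_plane_of_bounded_on_real hrot
    ⟨1, one_lt_two, 0, hO⟩ hreal him (z := -I * z) (by simpa using hz)

theorem eq_zero_of_differentiableOn_upperHalfPlane_of_continuousOn_diff_zero {g : ℂ → ℂ}
    {C : ℝ} (hd : DifferentiableOn ℂ g {z | 0 < z.im})
    (hc : ContinuousOn g ({z | 0 ≤ z.im} \ {0})) (hbdd : ∀ z : ℂ, 0 ≤ z.im → ‖g z‖ ≤ C)
    (hre : ∀ x : ℝ, g x = 0) {z : ℂ} (hz : 0 < z.im) : g z = 0 := by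
  set G : ℂ → ℂ := fun z => z / (z + I) * g z
  have hA : ∀ z : ℂ, 0 ≤ z.im → ContinuousAt (fun w => w / (w + I)) z := fun z hz => by
    fun_prop (disch := exact add_I_ne_zero hz)
  have hGc : ContinuousOn G {z | 0 ≤ z.im} := by
    intro w hw
    rcases eq_or_ne w 0 with rfl | hw0
    · have hA0 : Tendsto (fun w => w / (w + I)) (𝓝[{z | 0 ≤ z.im}] 0) (𝓝 0) := by
        simpa using ((hA 0 le_rfl).tendsto.mono_left nhdsWithin_le_nhds)
      simpa [ContinuousWithinAt, G] using hA0.zero_mul_isBoundedUnder_le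
        (isBoundedUnder_of_eventually_le (eventually_nhdsWithin_of_forall hbdd))
    · exact (hA w hw).continuousWithinAt.mul
        (continuousWithinAt_sdiff_singleton.1 (hc w ⟨hw, hw0⟩))
  have hGd : DifferentiableOn ℂ G {z | 0 < z.im} := fun w hw =>
    ((differentiableAt_id.div (differentiableAt_id.add_const I)
      (add_I_ne_zero hw.le)).differentiableWithinAt).mul (hd w hw)
  have hG : G z = 0 := eq_zero_of_diffContOnCl_upperHalfPlane ⟨hGd, by simpa using hGc⟩
    ⟨1 * C, fun w hw => norm_mul_le_of_le (norm_div_add_I_le_one hw) (hbdd w hw)⟩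
    (fun x => by simp [G, hre]) hz.le
  have hz0 : z ≠ 0 := by rintro rfl; simp at hz
  exact (mul_eq_zero.1 hG).resolve_left (div_ne_zero hz0 (add_I_ne_zero hz.le))

lemma differentiableOn_comp_sub_inv {F : ℂ → ℂ} (hF : DifferentiableOn ℂ F {z | 0 < z.im})
    (a : ℝ) : DifferentiableOn ℂ (fun z => F ((a : ℂ) - z⁻¹)) {z | 0 < z.im} := by
  refine hF.comp (fun z hz => ?_) (mapsTo_sub_inv_of_pos a)
  have hz0 : z ≠ 0 := by rintro rfl; simp at hz
  exact ((differentiableAt_inv hz0).const_sub _).differentiableWithinAt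

lemma differentiableOn_comp_add_mul {F : ℂ → ℂ} (hF : DifferentiableOn ℂ F {z | 0 < z.im})
    {a : ℝ} (ha : 0 < a) (b : ℝ) :
    DifferentiableOn ℂ (fun z => F ((b : ℂ) + a * z)) {z | 0 < z.im} :=
  hF.comp (by fun_prop) (mapsTo_add_mul_of_pos ha b)

noncomputable def spreadZeros (c : ℝ) (F : ℂ → ℂ) (z : ℂ) : ℂ :=
  F (((c / 2 : ℝ) : ℂ) - z⁻¹) * F (((c / 2 : ℝ) : ℂ) + ((c ^ 2 / 4 : ℝ) : ℂ) * z)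

section spreadZeros

variable {c : ℝ} {F : ℂ → ℂ}

lemma spreadZeros_ofReal (hc : 0 < c) (hF : ∀ x : ℝ, 0 ≤ x → x ≤ c → F x = 0) (x : ℝ) :
    spreadZeros c F x = 0 := by
  rcases le_total (2 / c) |x| with hx | hx
  · have hinv : |x⁻¹| ≤ c / 2 := by
      rw [abs_inv, inv_le_comm₀ ((by positivity : (0 : ℝ) < 2 / c).trans_le hx) (by positivity),
        inv_div]
      exact hx
    have h := hF (c / 2 - x⁻¹) (by linarith [(abs_le.1 hinv).2]) (by linarith [(abs_le.1 hinv).1])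
    push_cast at h
    simp [spreadZeros, h]
  · have hmul : |c ^ 2 / 4 * x| ≤ c / 2 := by
      rw [abs_mul, abs_of_pos (by positivity)]
      calc c ^ 2 / 4 * |x| ≤ c ^ 2 / 4 * (2 / c) := by gcongr
        _ = c / 2 := by field_simp; ring
    have h := hF (c / 2 + c ^ 2 / 4 * x) (by linarith [(abs_le.1 hmul).1])
      (by linarith [(abs_le.1 hmul).2])
    push_cast at h
    simp [spreadZeros, h]

lemma norm_spreadZeros_le {C : ℝ} (hC : ∀ z : ℂ, 0 ≤ z.im → ‖F z‖ ≤ C) {z : ℂ}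
    (hz : 0 ≤ z.im) : ‖spreadZeros c F z‖ ≤ C * C :=
  norm_mul_le_of_le (hC _ (mapsTo_sub_inv _ hz)) (hC _ (mapsTo_add_mul (by positivity) _ hz))

lemma continuousOn_spreadZeros (hF : ContinuousOn F {z | 0 ≤ z.im}) :
    ContinuousOn (spreadZeros c F) ({z | 0 ≤ z.im} \ {0}) :=
  (hF.comp (continuousOn_const.sub (continuousOn_inv₀.mono fun _ hz => hz.2))
      fun _ hz => mapsTo_sub_inv _ hz.1).mul
    (hF.comp (by fun_prop) fun _ hz => mapsTo_add_mul (by positivity) _ hz.1)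

lemma differentiableOn_spreadZeros (hc : c ≠ 0) (hF : DifferentiableOn ℂ F {z | 0 < z.im}) :
    DifferentiableOn ℂ (spreadZeros c F) {z | 0 < z.im} :=
  (differentiableOn_comp_sub_inv hF _).mul (differentiableOn_comp_add_mul hF (by positivity) _)

lemma eq_zero_of_spreadZeros_eq_zero (hc : c ≠ 0) (hF : DifferentiableOn ℂ F {z | 0 < z.im})
    (h : ∀ z : ℂ, 0 < z.im → spreadZeros c F z = 0) : ∀ z : ℂ, 0 < z.im → F z = 0 := by
  have hU : IsOpen {z : ℂ | 0 < z.im} := isOpen_lt continuous_const continuous_im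
  rcases AnalyticOnNhd.eq_zero_or_eq_zero_of_mul_eq_zero
    ((differentiableOn_comp_sub_inv hF _).analyticOnNhd hU)
    ((differentiableOn_comp_add_mul hF (by positivity) _).analyticOnNhd hU) h
    (convex_halfSpace_im_gt 0).isPreconnected with h | h
  · exact ((surjOn_sub_inv _).forall (mapsTo_sub_inv_of_pos _)).2 h
  · exact ((surjOn_add_mul (by positivity) _).forall (mapsTo_add_mul_of_pos (by positivity) _)).2 h

end spreadZeros

/-- **Riemann–Schwarz reflection step.**
A function bounded and continuous on the closed upper half-plane, holomorphic on the open
upper half-plane, which vanishes on a real interval `[0, c]` (with `c > 0`), vanishes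
identically on the closed upper half-plane. -/
theorem vanishing_on_interval_implies_zero_upper_half_plane
    (F : ℂ → ℂ)
    (hbdd : ∃ C : ℝ, ∀ z : ℂ, 0 ≤ z.im → ‖F z‖ ≤ C)
    (hcont : ContinuousOn F {z : ℂ | 0 ≤ z.im})
    (hdiff : DifferentiableOn ℂ F {z : ℂ | 0 < z.im})
    (c : ℝ) (hc : 0 < c)
    (hvanish : ∀ x : ℝ, 0 ≤ x → x ≤ c → F (x : ℂ) = 0) :
    ∀ z : ℂ, 0 ≤ z.im → F z = 0 := by
  obtain ⟨C, hC⟩ := hbdd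
  have hspread : ∀ z : ℂ, 0 < z.im → spreadZeros c F z = 0 := fun _ =>
    eq_zero_of_differentiableOn_upperHalfPlane_of_continuousOn_diff_zero
      (differentiableOn_spreadZeros hc.ne' hdiff) (continuousOn_spreadZeros hcont)
      (fun _ => norm_spreadZeros_le hC) (spreadZeros_ofReal hc hvanish)
  have hU : EqOn F 0 {z | 0 < z.im} := eq_zero_of_spreadZeros_eq_zero hc.ne' hdiff hspread
  exact fun z hz =>
    hU.of_subset_closure hcont continuousOn_const (fun _ => le_of_lt (α := ℝ)) (by simp) hz
end

section
/- Let f, g ∈ L²(ℝ, ℂ) and define F : ℂ → ℂ by F(z) = ∫_ℝ conj(g(p)) · exp(i z p²/2) · f(p) dp for Im z ≥ 0. Then F is well defined, bounded and continuous on the closed upper half-plane {z : Im z ≥ 0}, holomorphic on the open upper half-plane {z : Im z > 0}, and for real λ it equals the inner product ⟨g, U(λ)f⟩, where U(λ) is the unitary operator of multiplication by exp(i λ p²/2) on L²(ℝ). -/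
open MeasureTheory Complex
open scoped ComplexConjugate

/-!
Write the integrand as `exp (i z E(p)) w(p)` with energy `E(p) = p²/2 ≥ 0` and
`w = conj g · f ∈ L¹` (Hölder). For `Im z ≥ 0` the factor `exp (i z E)` has modulus
`exp (-(Im z) E) ≤ 1`, so `|w|` dominates the integrand uniformly, which gives integrability,
boundedness and continuity. Holomorphy comes from differentiating under the integral sign:
on `Im z > ε` the `z`-derivative `i E exp (i z E) w` is dominated by `ε⁻¹ |w|`, because
`t e^{-εt} ≤ ε⁻¹`.
-/

lemma Real.mul_exp_neg_mul_le_inv {s : ℝ} (hs : 0 < s) (t : ℝ) :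
    t * Real.exp (-(s * t)) ≤ s⁻¹ := by
  have hst : s * t ≤ Real.exp (s * t) := by linarith [Real.add_one_le_exp (s * t)]
  rw [Real.exp_neg, ← div_eq_mul_inv, div_le_iff₀ (Real.exp_pos _), inv_mul_eq_div,
    le_div_iff₀ hs, mul_comm]
  exact hst

namespace Complex

lemma norm_exp_I_mul_mul_ofReal (z : ℂ) (t : ℝ) : ‖cexp (I * z * t)‖ = Real.exp (-(z.im * t)) := by
  simp [norm_exp]

lemma norm_exp_I_mul_mul_ofReal_le_one {z : ℂ} {t : ℝ} (hz : 0 ≤ z.im) (ht : 0 ≤ t) :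
    ‖cexp (I * z * t)‖ ≤ 1 := by
  rw [norm_exp_I_mul_mul_ofReal, Real.exp_le_one_iff, neg_nonpos]
  exact mul_nonneg hz ht

lemma mul_norm_exp_I_mul_mul_ofReal_le_inv {z : ℂ} {ε t : ℝ} (hε : 0 < ε) (hz : ε ≤ z.im)
    (ht : 0 ≤ t) : t * ‖cexp (I * z * t)‖ ≤ ε⁻¹ :=
  calc t * ‖cexp (I * z * t)‖ = t * Real.exp (-(z.im * t)) := by rw [norm_exp_I_mul_mul_ofReal]
    _ ≤ t * Real.exp (-(ε * t)) := by gcongr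
    _ ≤ ε⁻¹ := Real.mul_exp_neg_mul_le_inv hε t

lemma hasDerivAt_exp_I_mul_mul_ofReal (t : ℝ) (z : ℂ) :
    HasDerivAt (fun u : ℂ => cexp (I * u * t)) (I * t * cexp (I * z * t)) z := by
  have h := (((hasDerivAt_id z).const_mul I).mul_const (t : ℂ)).cexp
  simp only [id_eq, mul_one] at h
  rwa [mul_comm] at h

lemma norm_exp_I_mul_mul_le {α : Type*} {E : α → ℝ} {w : α → ℂ} (hE : ∀ p, 0 ≤ E p) {z : ℂ}
    (hz : 0 ≤ z.im) (p : α) : ‖cexp (I * z * E p) * w p‖ ≤ ‖w p‖ := by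
  rw [norm_mul]
  exact mul_le_of_le_one_left (norm_nonneg _) (norm_exp_I_mul_mul_ofReal_le_one hz (hE p))

end Complex

section PositiveEnergy

variable {α : Type*} [MeasurableSpace α] {μ : Measure α} {E : α → ℝ} {w : α → ℂ}

lemma aestronglyMeasurable_exp_I_mul_mul (hE : Measurable E) (hw : AEStronglyMeasurable w μ)
    (z : ℂ) : AEStronglyMeasurable (fun p => cexp (I * z * E p) * w p) μ :=
  (by fun_prop : Measurable fun p => cexp (I * z * E p)).aestronglyMeasurable.mul hw

lemma integrable_exp_I_mul_mul (hE₀ : ∀ p, 0 ≤ E p) (hE : Measurable E) (hw : Integrable w μ)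
    {z : ℂ} (hz : 0 ≤ z.im) : Integrable (fun p => cexp (I * z * E p) * w p) μ :=
  hw.norm.mono' (aestronglyMeasurable_exp_I_mul_mul hE hw.1 z)
    (.of_forall (norm_exp_I_mul_mul_le hE₀ hz))

lemma norm_integral_exp_I_mul_mul_le (hE₀ : ∀ p, 0 ≤ E p) (hw : Integrable w μ) {z : ℂ}
    (hz : 0 ≤ z.im) : ‖∫ p, cexp (I * z * E p) * w p ∂μ‖ ≤ ∫ p, ‖w p‖ ∂μ :=
  norm_integral_le_of_norm_le hw.norm (.of_forall (norm_exp_I_mul_mul_le hE₀ hz))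

lemma continuousOn_integral_exp_I_mul_mul (hE₀ : ∀ p, 0 ≤ E p) (hE : Measurable E)
    (hw : Integrable w μ) :
    ContinuousOn (fun z : ℂ => ∫ p, cexp (I * z * E p) * w p ∂μ) {z | 0 ≤ z.im} :=
  continuousOn_of_dominated (fun z _ => aestronglyMeasurable_exp_I_mul_mul hE hw.1 z)
    (fun _ hz => .of_forall (norm_exp_I_mul_mul_le hE₀ hz)) hw.norm
    (.of_forall fun _ => by fun_prop)

lemma hasDerivAt_integral_exp_I_mul_mul (hE₀ : ∀ p, 0 ≤ E p) (hE : Measurable E)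
    (hw : Integrable w μ) {z₀ : ℂ} (hz₀ : 0 < z₀.im) :
    HasDerivAt (fun z : ℂ => ∫ p, cexp (I * z * E p) * w p ∂μ)
      (∫ p, I * E p * cexp (I * z₀ * E p) * w p ∂μ) z₀ := by
  set ε := z₀.im / 2
  have hε : 0 < ε := half_pos hz₀
  have hnhds : {z : ℂ | ε < z.im} ∈ nhds z₀ :=
    (isOpen_lt continuous_const continuous_im).mem_nhds (half_lt_self hz₀)
  have hderiv_le : ∀ z ∈ {z : ℂ | ε < z.im}, ∀ p,
      ‖I * E p * cexp (I * z * E p) * w p‖ ≤ ε⁻¹ * ‖w p‖ := fun z hz p => by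
    rw [norm_mul, norm_mul, norm_mul, norm_I, one_mul, norm_real, Real.norm_of_nonneg (hE₀ p)]
    gcongr
    exact mul_norm_exp_I_mul_mul_ofReal_le_inv hε hz.le (hE₀ p)
  refine (hasDerivAt_integral_of_dominated_loc_of_deriv_le hnhds
    (.of_forall (aestronglyMeasurable_exp_I_mul_mul hE hw.1))
    (integrable_exp_I_mul_mul hE₀ hE hw hz₀.le)
    ((by fun_prop : Measurable fun p => I * E p * cexp (I * z₀ * E p)).aestronglyMeasurable.mul
      hw.1)
    (.of_forall fun p z hz => hderiv_le z hz p) (hw.norm.const_mul ε⁻¹)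
    (.of_forall fun p z _ => (hasDerivAt_exp_I_mul_mul_ofReal (E p) z).mul_const (w p))).2

lemma differentiableOn_integral_exp_I_mul_mul (hE₀ : ∀ p, 0 ≤ E p) (hE : Measurable E)
    (hw : Integrable w μ) :
    DifferentiableOn ℂ (fun z : ℂ => ∫ p, cexp (I * z * E p) * w p ∂μ) {z | 0 < z.im} :=
  fun _ hz =>
    (hasDerivAt_integral_exp_I_mul_mul hE₀ hE hw hz).differentiableAt.differentiableWithinAt

end PositiveEnergy

/-- **Positive-energy property of the free Hamiltonian `H = p²/2`.**
For `f, g ∈ L²(ℝ, ℂ)`, the function `F(z) = ∫ conj(g(p)) exp(i z p²/2) f(p) dp` is well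
defined (the integrand is integrable for `Im z ≥ 0`), bounded and continuous on the closed
upper half-plane, holomorphic on the open upper half-plane, and for real `λ` it equals the
inner product `⟨g, U(λ) f⟩` where `U(λ)` is multiplication by `exp(i λ p²/2)`. -/
theorem free_hamiltonian_positive_energy
    (f g : ℝ → ℂ)
    (hf : MemLp f 2 (volume : Measure ℝ)) (hg : MemLp g 2 (volume : Measure ℝ)) :
    -- well defined: the integrand is (Bochner) integrable for every z with Im z ≥ 0
    (∀ z : ℂ, 0 ≤ z.im → Integrable
      (fun p : ℝ => conj (g p) * Complex.exp (Complex.I * z * (p : ℂ) ^ 2 / 2) * f p)) ∧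
    -- bounded on the closed upper half-plane
    (∃ C : ℝ, ∀ z : ℂ, 0 ≤ z.im →
      ‖∫ p : ℝ, conj (g p) * Complex.exp (Complex.I * z * (p : ℂ) ^ 2 / 2) * f p‖ ≤ C) ∧
    -- continuous on the closed upper half-plane
    ContinuousOn
      (fun z : ℂ => ∫ p : ℝ, conj (g p) * Complex.exp (Complex.I * z * (p : ℂ) ^ 2 / 2) * f p)
      {z : ℂ | 0 ≤ z.im} ∧
    -- holomorphic on the open upper half-plane
    DifferentiableOn ℂ
      (fun z : ℂ => ∫ p : ℝ, conj (g p) * Complex.exp (Complex.I * z * (p : ℂ) ^ 2 / 2) * f p)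
      {z : ℂ | 0 < z.im} ∧
    -- on the real axis it is the inner product ⟨g, U(λ)f⟩, U(λ) multiplication by exp(iλp²/2)
    ∀ l : ℝ,
      (∫ p : ℝ, conj (g p) * Complex.exp (Complex.I * (l : ℂ) * (p : ℂ) ^ 2 / 2) * f p) =
      ∫ p : ℝ, conj (g p) * (Complex.exp (Complex.I * (l : ℂ) * (p : ℂ) ^ 2 / 2) * f p) := by
  have hw : Integrable (fun p => conj (g p) * f p) := hg.star.integrable_mul hf
  have hE₀ : ∀ p : ℝ, 0 ≤ p ^ 2 / 2 := fun p => by positivity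
  have hE : Measurable fun p : ℝ => p ^ 2 / 2 := by fun_prop
  have hintegrand : ∀ (z : ℂ) (p : ℝ), conj (g p) * cexp (I * z * (p : ℂ) ^ 2 / 2) * f p =
      cexp (I * z * ((p ^ 2 / 2 : ℝ) : ℂ)) * (conj (g p) * f p) := fun z p => by
    rw [ofReal_div, ofReal_pow, ofReal_ofNat, ← mul_div_assoc]
    ring
  refine ⟨?_, ?_, ?_, ?_, fun l => by simp only [mul_assoc]⟩ <;> simp only [hintegrand]
  · exact fun z hz => integrable_exp_I_mul_mul hE₀ hE hw hz
  · exact ⟨_, fun z hz => norm_integral_exp_I_mul_mul_le hE₀ hw hz⟩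
  · exact continuousOn_integral_exp_I_mul_mul hE₀ hE hw
  · exact differentiableOn_integral_exp_I_mul_mul hE₀ hE hw
end

section
/- A normalized POV-measure is projection-valued if and only if it is multiplicative: let 𝓗 be a complex Hilbert space and τ a normalized POV-measure on a measurable space (Ω, 𝓕) with values in the bounded operators on 𝓗; then (τ(X) ∘ τ(X) = τ(X) for every X ∈ 𝓕) if and only if (τ(X ∩ Y) = τ(X) ∘ τ(Y) for all X, Y ∈ 𝓕). -/
/-!
Countable additivity of the quadratic forms `φ ↦ ⟪φ, τ(·) φ⟫` makes `τ` finitely additive.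
If `P = τ X` and `Q = τ Y` are idempotents for disjoint `X, Y`, then so is `P + Q = τ (X ∪ Y)`,
hence `PQ + QP = 0`, which for an idempotent `P` in characteristic zero forces `PQ = 0`.
Splitting `X = (X ∩ Y) ∪ (X \ Y)` and `Y = (X ∩ Y) ∪ (Y \ X)` and expanding `τ X * τ Y`,
only the term `τ (X ∩ Y)² = τ (X ∩ Y)` survives.
-/

open MeasureTheory
open scoped InnerProductSpace

theorem ContinuousLinearMap.ext_inner_self {V : Type*} [NormedAddCommGroup V]
    [InnerProductSpace ℂ V] {A B : V →L[ℂ] V} (h : ∀ x, ⟪x, A x⟫_ℂ = ⟪x, B x⟫_ℂ) : A = B :=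
  coe_injective <| (ext_inner_map _ _).1 fun x => by
    simpa only [inner_conj_symm, coe_coe] using congrArg (starRingEnd ℂ) (h x)

section SetFunction

variable {Ω : Type*} [MeasurableSpace Ω]

namespace MeasureTheory.VectorMeasure

variable {M : Type*} [AddCommMonoid M] [TopologicalSpace M]

noncomputable def ofHasSum (m : Set Ω → M) (hm_empty : m ∅ = 0)
    (hm_iUnion : ∀ X : ℕ → Set Ω, (∀ i, MeasurableSet (X i)) →
      Pairwise (Function.onFun Disjoint X) → HasSum (fun i => m (X i)) (m (⋃ i, X i))) :
    VectorMeasure Ω M where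
  measureOf' s := open Classical in if MeasurableSet s then m s else 0
  empty' := by simp [hm_empty]
  not_measurable' _ hs := if_neg hs
  m_iUnion' X hX hdisj := by
    simpa only [hX, MeasurableSet.iUnion hX, if_true] using hm_iUnion X hX hdisj

theorem ofHasSum_apply {m : Set Ω → M} {hm_empty hm_iUnion} {s : Set Ω} (hs : MeasurableSet s) :
    ofHasSum m hm_empty hm_iUnion s = m s :=
  if_pos hs

end MeasureTheory.VectorMeasure

theorem union_of_hasSum_iUnion {M : Type*} [AddCommMonoid M] [TopologicalSpace M] [T2Space M]
    {m : Set Ω → M} (hm_empty : m ∅ = 0)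
    (hm_iUnion : ∀ X : ℕ → Set Ω, (∀ i, MeasurableSet (X i)) →
      Pairwise (Function.onFun Disjoint X) → HasSum (fun i => m (X i)) (m (⋃ i, X i)))
    {X Y : Set Ω} (hX : MeasurableSet X) (hY : MeasurableSet Y) (hXY : Disjoint X Y) :
    m (X ∪ Y) = m X + m Y := by
  have := (VectorMeasure.ofHasSum m hm_empty hm_iUnion).of_union hXY hX hY
  rwa [VectorMeasure.ofHasSum_apply (hX.union hY), VectorMeasure.ofHasSum_apply hX,
    VectorMeasure.ofHasSum_apply hY] at this

variable {R : Type*} [Ring R] [IsAddTorsionFree R] {τ : Set Ω → R}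
  (hτ_union : ∀ X Y, MeasurableSet X → MeasurableSet Y → Disjoint X Y → τ (X ∪ Y) = τ X + τ Y)
  (hτ_idem : ∀ X, MeasurableSet X → IsIdempotentElem (τ X))
include hτ_union hτ_idem

theorem mul_eq_zero_of_disjoint_of_isIdempotentElem {X Y : Set Ω} (hX : MeasurableSet X)
    (hY : MeasurableSet Y) (hXY : Disjoint X Y) : τ X * τ Y = 0 := by
  have hsum : IsIdempotentElem (τ X + τ Y) := hτ_union X Y hX hY hXY ▸ hτ_idem _ (hX.union hY)
  exact (hτ_idem X hX).mul_eq_zero_of_anticommute <|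
    ((hτ_idem X hX).add_iff (hτ_idem Y hY)).1 hsum

theorem map_inter_eq_mul_of_isIdempotentElem {X Y : Set Ω} (hX : MeasurableSet X)
    (hY : MeasurableSet Y) : τ (X ∩ Y) = τ X * τ Y := by
  have hdecomp : ∀ {A B : Set Ω}, MeasurableSet A → MeasurableSet B →
      τ A = τ (A ∩ B) + τ (A \ B) := fun hA hB => by
    rw [← hτ_union _ _ (hA.inter hB) (hA.diff hB) Set.disjoint_sdiff_inter.symm,
      Set.inter_union_sdiff]
  have hXY := mul_eq_zero_of_disjoint_of_isIdempotentElem hτ_union hτ_idem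
    (hX.inter hY) (hY.diff hX) (Set.inter_comm X Y ▸ Set.disjoint_sdiff_inter.symm)
  have hYX := mul_eq_zero_of_disjoint_of_isIdempotentElem hτ_union hτ_idem
    (hX.diff hY) (hX.inter hY) Set.disjoint_sdiff_inter
  have hdiff := mul_eq_zero_of_disjoint_of_isIdempotentElem hτ_union hτ_idem
    (hX.diff hY) (hY.diff hX) (Set.disjoint_sdiff_right.mono_left Set.sdiff_subset)
  rw [hdecomp hX hY, hdecomp hY hX, Set.inter_comm Y X, add_mul, mul_add, mul_add,
    (hτ_idem _ (hX.inter hY)).eq, hXY, hYX, hdiff, add_zero, add_zero, add_zero]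

end SetFunction

theorem pov_idempotent_iff_multiplicative_general
    {H : Type*} [NormedAddCommGroup H] [InnerProductSpace ℂ H]
    {Ω : Type*} [MeasurableSpace Ω]
    (τ : Set Ω → (H →L[ℂ] H))
    (hτ_empty : τ ∅ = 0)
    (hτ_add : ∀ X : ℕ → Set Ω, (∀ i, MeasurableSet (X i)) →
      Pairwise (Function.onFun Disjoint X) → ∀ φ : H,
      HasSum (fun i => ⟪φ, τ (X i) φ⟫_ℂ) ⟪φ, τ (⋃ i, X i) φ⟫_ℂ) :
    (∀ X : Set Ω, MeasurableSet X → τ X ∘L τ X = τ X) ↔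
      (∀ X Y : Set Ω, MeasurableSet X → MeasurableSet Y →
        τ (X ∩ Y) = τ X ∘L τ Y) := by
  have := IsAddTorsionFree.of_isTorsionFree ℂ (H →L[ℂ] H)
  have hτ_union : ∀ X Y, MeasurableSet X → MeasurableSet Y → Disjoint X Y →
      τ (X ∪ Y) = τ X + τ Y := fun X Y hX hY hXY =>
    ContinuousLinearMap.ext_inner_self fun φ => by
      rw [add_apply, inner_add_right]
      exact union_of_hasSum_iUnion (m := fun s => ⟪φ, τ s φ⟫_ℂ) (by simp [hτ_empty])
        (fun X hX hdisj => hτ_add X hX hdisj φ) hX hY hXY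
  refine ⟨fun hidem X Y hX hY => map_inter_eq_mul_of_isIdempotentElem hτ_union hidem hX hY,
    fun hmul X hX => ?_⟩
  rw [← hmul X X hX hX, Set.inter_self]

/-- **A normalized POV-measure is projection-valued iff it is multiplicative.**
Let `τ` be a normalized POV-measure on a measurable space `(Ω, 𝓕)` with values in the
bounded operators of a complex Hilbert space `H`. Then `τ(X)² = τ(X)` for every
measurable `X` if and only if `τ(X ∩ Y) = τ(X) τ(Y)` for all measurable `X, Y`. -/
theorem pov_idempotent_iff_multiplicative
    {H : Type*} [NormedAddCommGroup H] [InnerProductSpace ℂ H] [CompleteSpace H]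
    {Ω : Type*} [MeasurableSpace Ω]
    (τ : Set Ω → (H →L[ℂ] H))
    (hτ_pos : ∀ X : Set Ω, MeasurableSet X → (τ X).IsPositive)
    (hτ_empty : τ ∅ = 0)
    (hτ_univ : τ Set.univ = 1)
    (hτ_add : ∀ X : ℕ → Set Ω, (∀ i, MeasurableSet (X i)) →
      Pairwise (Function.onFun Disjoint X) → ∀ φ : H,
      HasSum (fun i => ⟪φ, τ (X i) φ⟫_ℂ) ⟪φ, τ (⋃ i, X i) φ⟫_ℂ) :
    (∀ X : Set Ω, MeasurableSet X → τ X ∘L τ X = τ X) ↔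
      (∀ X Y : Set Ω, MeasurableSet X → MeasurableSet Y →
        τ (X ∩ Y) = τ X ∘L τ Y) :=
  pov_idempotent_iff_multiplicative_general τ hτ_empty hτ_add
end
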